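/- (Theorem 2, vanishing non-critical weight limit.) Let g₁, …, g_T : Ω → ℝ^d be random vectors on a probability space with E‖gᵢ‖² < ∞, let U be a subspace of ℝ^d with orthogonal projections P onto U and P⊥ onto U⊥, let K ⊆ {1, …, T}, and assume Bounded Noise Correlation with constant ρ ≥ 0. Suppose there is a vector μ ∈ U with ‖μ‖² ≥ σ² > 0 such that E[P gᵢ] = μ for all i ∈ K and E[P gᵢ] = 0 for all i ∉ K. Fix indicator weights on K: ωᵢ = 1 for i ∈ K and ωᵢ = 0 for i ∉ K, with |K| ≥ c > 0, and let δ = (1 + ρ(T − 1)) ∑_{i ∈ K} E‖P⊥ gᵢ‖² > 0. Then the estimator ĝ = ∑_{i ∈ K} gᵢ satisfies E‖P ĝ‖² / E‖P⊥ ĝ‖² ≥ c² σ² / δ; that is, when the weight placed on non-critical tokens is zero, the signal-to-noise ratio is bounded below by c²σ²/δ, which is the limit of the Theorem 2 bound as ∑_{i ∉ K} ωᵢ² → 0. -/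

import Mathlib

/-! Write `aᵢ = E‖P⊥ gᵢ‖²`. Expanding `E‖P⊥ ĝ‖²` into pairwise correlations, bounded noise
correlation and Cauchy–Schwarz for `∑ √aᵢ` bound the noise by `(1 + ρ(|K| − 1)) ∑ aᵢ ≤ δ`.
The mean of `P ĝ` is `|K| μ`, so by Jensen the signal is at least `|K|² ‖μ‖² ≥ c² σ²`. -/

open MeasureTheory Finset
open scoped RealInnerProductSpace BigOperators

/-- The orthogonal projection onto a subspace `W` of `ℝ^d`, viewed as a map `ℝ^d → ℝ^d`. -/
noncomputable def Pproj {d : ℕ} (W : Submodule ℝ (EuclideanSpace ℝ (Fin d))) :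
    EuclideanSpace ℝ (Fin d) →L[ℝ] EuclideanSpace ℝ (Fin d) :=
  W.subtypeL.comp (W.orthogonalProjection)

theorem sum_sum_le_of_offDiag_le {ι : Type*} (s : Finset ι) {M : ι → ι → ℝ}
    {a : ι → ℝ} {ρ : ℝ} (ha : ∀ i ∈ s, 0 ≤ a i) (hρ : 0 ≤ ρ) (hdiag : ∀ i ∈ s, M i i = a i)
    (hoff : ∀ i ∈ s, ∀ j ∈ s, i ≠ j → M i j ≤ ρ * √(a i) * √(a j)) :
    ∑ i ∈ s, ∑ j ∈ s, M i j ≤ (1 + ρ * (#s - 1)) * ∑ i ∈ s, a i := by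
  classical
  set S := ∑ i ∈ s, √(a i)
  set A := ∑ i ∈ s, a i
  have hsplit : ∑ i ∈ s, ∑ j ∈ s, M i j = A + ∑ i ∈ s, ∑ j ∈ s.erase i, M i j := by
    rw [← sum_add_distrib]
    refine sum_congr rfl fun i hi => ?_
    rw [← hdiag i hi, add_sum_erase s _ hi]
  have hcross : ∑ i ∈ s, ∑ j ∈ s.erase i, √(a i) * √(a j) = S ^ 2 - A := by
    calc ∑ i ∈ s, ∑ j ∈ s.erase i, √(a i) * √(a j)
        = ∑ i ∈ s, (√(a i) * S - a i) := sum_congr rfl fun i hi => by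
          rw [← mul_sum, sum_erase_eq_sub hi, mul_sub, Real.mul_self_sqrt (ha i hi)]
      _ = S ^ 2 - A := by rw [sum_sub_distrib, ← sum_mul, sq]
  have hoff_sum : ∑ i ∈ s, ∑ j ∈ s.erase i, M i j ≤ ρ * (S ^ 2 - A) := by
    rw [← hcross, mul_sum]
    refine sum_le_sum fun i hi => ?_
    rw [mul_sum]
    exact sum_le_sum fun j hj =>
      (hoff i hi j (mem_of_mem_erase hj) (ne_of_mem_erase hj).symm).trans_eq (mul_assoc _ _ _)
  have hCS : S ^ 2 ≤ #s * A := by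
    have := sq_sum_le_card_mul_sum_sq (s := s) (f := fun i => √(a i))
    rwa [sum_congr rfl fun i hi => Real.sq_sqrt (ha i hi)] at this
  nlinarith [mul_le_mul_of_nonneg_left hCS hρ]

section SecondMoments

variable {Ω E : Type*} [MeasurableSpace Ω] {μ : Measure Ω}
  [NormedAddCommGroup E] [InnerProductSpace ℝ E]

theorem MeasureTheory.MemLp.integrable_inner {f g : Ω → E} (hf : MemLp f 2 μ)
    (hg : MemLp g 2 μ) :
    Integrable (fun x => ⟪f x, g x⟫) μ :=
  memLp_one_iff_integrable.1 ((innerSL ℝ (E := E)).memLp_of_bilin 1 hf hg)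

theorem integral_norm_sum_sq {ι : Type*} (s : Finset ι) {f : ι → Ω → E}
    (hf : ∀ i ∈ s, MemLp (f i) 2 μ) :
    ∫ x, ‖∑ i ∈ s, f i x‖ ^ 2 ∂μ = ∑ i ∈ s, ∑ j ∈ s, ∫ x, ⟪f i x, f j x⟫ ∂μ := by
  simp_rw [← real_inner_self_eq_norm_sq, sum_inner, inner_sum]
  rw [integral_finsetSum s fun i hi =>
    integrable_finsetSum s fun j hj => (hf i hi).integrable_inner (hf j hj)]
  exact sum_congr rfl fun i hi =>
    integral_finsetSum s fun j hj => (hf i hi).integrable_inner (hf j hj)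

theorem sq_norm_integral_le_integral_sq_norm [IsProbabilityMeasure μ] {f : Ω → E}
    (hf : MemLp f 2 μ) : ‖∫ x, f x ∂μ‖ ^ 2 ≤ ∫ x, ‖f x‖ ^ 2 ∂μ := by
  have hvar := ProbabilityTheory.variance_nonneg (fun x => ‖f x‖) μ
  rw [ProbabilityTheory.variance_eq_sub hf.norm] at hvar
  calc ‖∫ x, f x ∂μ‖ ^ 2 ≤ (∫ x, ‖f x‖ ∂μ) ^ 2 :=
        pow_le_pow_left₀ (norm_nonneg _) (norm_integral_le_integral_norm _) 2
    _ ≤ ∫ x, ‖f x‖ ^ 2 ∂μ := by simpa using hvar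

end SecondMoments

theorem stmt15_general {Ω : Type*} [MeasurableSpace Ω] (μ : Measure Ω) [IsProbabilityMeasure μ]
    {d T : ℕ} (g : Fin T → Ω → EuclideanSpace ℝ (Fin d))
    (hmeas : ∀ i, Measurable (g i))
    (hL2 : ∀ i, Integrable (fun x => ‖g i x‖ ^ 2) μ)
    (U : Submodule ℝ (EuclideanSpace ℝ (Fin d)))
    (K : Finset (Fin T))
    (ρ : ℝ) (hρ : 0 ≤ ρ)
    (hBNC : ∀ i j, i ≠ j →
      |∫ x, ⟪Pproj Uᗮ (g i x), Pproj Uᗮ (g j x)⟫ ∂μ|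
        ≤ ρ * Real.sqrt (∫ x, ‖Pproj Uᗮ (g i x)‖ ^ 2 ∂μ)
            * Real.sqrt (∫ x, ‖Pproj Uᗮ (g j x)‖ ^ 2 ∂μ))
    (μvec : EuclideanSpace ℝ (Fin d))
    (σ : ℝ) (hμσ : σ ^ 2 ≤ ‖μvec‖ ^ 2)
    (hmeanK : ∀ i ∈ K, (∫ x, Pproj U (g i x) ∂μ) = μvec)
    (c : ℝ) (hc : 0 < c) (hcK : c ≤ (K.card : ℝ))
    (δ : ℝ)
    (hδ : δ = (1 + ρ * ((T : ℝ) - 1)) * ∑ i ∈ K, ∫ x, ‖Pproj Uᗮ (g i x)‖ ^ 2 ∂μ)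
    (hnoise : 0 < ∫ x, ‖Pproj Uᗮ (∑ i ∈ K, g i x)‖ ^ 2 ∂μ) :
    c ^ 2 * σ ^ 2 / δ
      ≤ (∫ x, ‖Pproj U (∑ i ∈ K, g i x)‖ ^ 2 ∂μ)
          / ∫ x, ‖Pproj Uᗮ (∑ i ∈ K, g i x)‖ ^ 2 ∂μ := by
  have hg : ∀ i, MemLp (g i) 2 μ := fun i =>
    (memLp_two_iff_integrable_sq_norm (hmeas i).aestronglyMeasurable).2 (hL2 i)
  have hsignal : c ^ 2 * σ ^ 2 ≤ ∫ x, ‖Pproj U (∑ i ∈ K, g i x)‖ ^ 2 ∂μ := by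
    have hsum : MemLp (fun x => ∑ i ∈ K, g i x) 2 μ := by
      simpa only [← Finset.sum_apply] using memLp_finsetSum' K fun i _ => hg i
    have hmean : ∫ x, Pproj U (∑ i ∈ K, g i x) ∂μ = #K • μvec := by
      simp_rw [map_sum]
      rw [integral_finsetSum K fun i _ => (Pproj U).integrable_comp ((hg i).integrable one_le_two),
        sum_congr rfl hmeanK, sum_const]
    calc c ^ 2 * σ ^ 2 ≤ (#K : ℝ) ^ 2 * ‖μvec‖ ^ 2 := by gcongr
      _ = ‖∫ x, Pproj U (∑ i ∈ K, g i x) ∂μ‖ ^ 2 := by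
        rw [hmean, ← Nat.cast_smul_eq_nsmul ℝ, norm_smul, mul_pow, Real.norm_natCast]
      _ ≤ _ := sq_norm_integral_le_integral_sq_norm ((Pproj U).comp_memLp' hsum)
  have hnoise_le : ∫ x, ‖Pproj Uᗮ (∑ i ∈ K, g i x)‖ ^ 2 ∂μ ≤ δ := by
    have hcard : (#K : ℝ) ≤ T := by
      exact_mod_cast (card_le_univ K).trans_eq (Fintype.card_fin T)
    simp_rw [map_sum]
    rw [integral_norm_sum_sq (f := fun i x => Pproj Uᗮ (g i x)) K
      fun i _ => (Pproj Uᗮ).comp_memLp' (hg i), hδ]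
    calc _ ≤ (1 + ρ * (#K - 1)) * ∑ i ∈ K, ∫ x, ‖Pproj Uᗮ (g i x)‖ ^ 2 ∂μ :=
          sum_sum_le_of_offDiag_le K (fun i _ => integral_nonneg fun _ => sq_nonneg _) hρ
            (fun i _ => by simp_rw [real_inner_self_eq_norm_sq])
            (fun i _ j _ hij => (le_abs_self _).trans (hBNC i j hij))
      _ ≤ _ := by
        refine mul_le_mul_of_nonneg_right (by nlinarith) ?_
        exact sum_nonneg fun i _ => integral_nonneg fun _ => sq_nonneg _
  exact div_le_div₀ (integral_nonneg fun _ => sq_nonneg _) hsignal hnoise hnoise_le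

/-- Theorem 2, vanishing non-critical weight limit: with indicator weights
placed exactly on the knowledge-critical set `K` (so `ĝ = ∑_{i ∈ K} gᵢ`), a common signal
mean `μvec ∈ U` with `‖μvec‖² ≥ σ² > 0` on `K`, `|K| ≥ c > 0`, and
`δ = (1 + ρ(T − 1)) ∑_{i ∈ K} E‖P⊥ gᵢ‖² > 0`, the signal-to-noise ratio satisfies
`E‖P ĝ‖² / E‖P⊥ ĝ‖² ≥ c² σ² / δ`. -/
theorem stmt15 {Ω : Type*} [MeasurableSpace Ω] (μ : Measure Ω) [IsProbabilityMeasure μ]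
    {d T : ℕ} (g : Fin T → Ω → EuclideanSpace ℝ (Fin d))
    (hmeas : ∀ i, Measurable (g i))
    (hL2 : ∀ i, Integrable (fun x => ‖g i x‖ ^ 2) μ)
    (U : Submodule ℝ (EuclideanSpace ℝ (Fin d)))
    (K : Finset (Fin T))
    (ρ : ℝ) (hρ : 0 ≤ ρ)
    (hBNC : ∀ i j, i ≠ j →
      |∫ x, ⟪Pproj Uᗮ (g i x), Pproj Uᗮ (g j x)⟫ ∂μ|
        ≤ ρ * Real.sqrt (∫ x, ‖Pproj Uᗮ (g i x)‖ ^ 2 ∂μ)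
            * Real.sqrt (∫ x, ‖Pproj Uᗮ (g j x)‖ ^ 2 ∂μ))
    (μvec : EuclideanSpace ℝ (Fin d)) (hμU : μvec ∈ U)
    (σ : ℝ) (hσpos : 0 < σ ^ 2) (hμσ : σ ^ 2 ≤ ‖μvec‖ ^ 2)
    (hmeanK : ∀ i ∈ K, (∫ x, Pproj U (g i x) ∂μ) = μvec)
    (hmean0 : ∀ i ∉ K, (∫ x, Pproj U (g i x) ∂μ) = 0)
    (c : ℝ) (hc : 0 < c) (hcK : c ≤ (K.card : ℝ))
    (δ : ℝ)
    (hδ : δ = (1 + ρ * ((T : ℝ) - 1)) * ∑ i ∈ K, ∫ x, ‖Pproj Uᗮ (g i x)‖ ^ 2 ∂μ)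
    (hδpos : 0 < δ)
    (hnoise : 0 < ∫ x, ‖Pproj Uᗮ (∑ i ∈ K, g i x)‖ ^ 2 ∂μ) :
    c ^ 2 * σ ^ 2 / δ
      ≤ (∫ x, ‖Pproj U (∑ i ∈ K, g i x)‖ ^ 2 ∂μ)
          / ∫ x, ‖Pproj Uᗮ (∑ i ∈ K, g i x)‖ ^ 2 ∂μ :=
  stmt15_general μ g hmeas hL2 U K ρ hρ hBNC μvec σ hμσ hmeanK c hc hcK δ hδ hnoise
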